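/- arXiv:hep-th/0606105 — 2 statements merged into one kernel-verified Lean document; each statement's English description precedes it below -/
import Mathlib

section
/- Let Δ ≥ 4 and let p, q, r, s ∈ {1,…,Δ} be pairwise distinct. Then, as linear operators on the vector-spinor space V, ⁅S^{qrs}, ⁅S^{qrs}, T^{pq}⁆⁆ + T^{pq} = 0, where the bracket of operators is the commutator. (This is the Serre-like consistency relation for the unfaithful vector-spinor representation of K(E₁₀); it holds for every dimension Δ.) -/
/-- The standard positive-definite quadratic form on `ℝ^Δ`. -/
noncomputable def stdQuadraticForm (n : ℕ) : QuadraticForm ℝ (Fin n → ℝ) :=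
  QuadraticMap.weightedSumSquares ℝ (fun _ : Fin n => (1 : ℝ))

/-- The Clifford algebra `Cl(Δ)` of the standard positive-definite quadratic form on `ℝ^Δ`. -/
abbrev Cl (n : ℕ) := CliffordAlgebra (stdQuadraticForm n)

/-- The generators `e₁, …, e_Δ` of `Cl(Δ)`. -/
noncomputable def ee {n : ℕ} (a : Fin n) : Cl n :=
  CliffordAlgebra.ι (stdQuadraticForm n) (Pi.single a 1)

section VectorSpinor

variable {Δ : ℕ} {M : Type*} [AddCommGroup M] [Module (Cl Δ) M]

/-- `Γ_d^{xy} := e_d e_x e_y` if `d ∉ {x,y}` and `0` otherwise. -/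
noncomputable def Gam3 (d x y : Fin Δ) : Cl Δ :=
  if d = x ∨ d = y then 0 else ee d * ee x * ee y

/-- The level-0 `K(E₁₀)` action on vector-spinors:
`(T^{ab}Ψ)_c := (1/2)·eₐe_b·Ψ_c + δ_c^a·Ψ_b − δ_c^b·Ψ_a`. -/
noncomputable def Tlev (a b : Fin Δ) (Ψ : Fin Δ → M) : Fin Δ → M := fun c =>
  (((1 : ℝ)/2) • (ee a * ee b)) • Ψ c
    + (if c = a then Ψ b else 0) - (if c = b then Ψ a else 0)

/-- The level-1 `K(E₁₀)` action on vector-spinors: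
`(S^{abc}Ψ)_d := (1/2)·eₐe_be_c·Ψ_d
  + (2/3)·(δ_d^a·(e_b·Ψ_c − e_c·Ψ_b) + δ_d^b·(e_c·Ψ_a − e_a·Ψ_c) + δ_d^c·(e_a·Ψ_b − e_b·Ψ_a))
  − (1/3)·(Γ_d^{ab}·Ψ_c + Γ_d^{bc}·Ψ_a + Γ_d^{ca}·Ψ_b)`. -/
noncomputable def Sop (a b c : Fin Δ) (Ψ : Fin Δ → M) : Fin Δ → M := fun d =>
  (((1 : ℝ)/2) • (ee a * ee b * ee c)) • Ψ d
    + (if d = a then (((2 : ℝ)/3) • ee b) • Ψ c - (((2 : ℝ)/3) • ee c) • Ψ b else 0)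
    + (if d = b then (((2 : ℝ)/3) • ee c) • Ψ a - (((2 : ℝ)/3) • ee a) • Ψ c else 0)
    + (if d = c then (((2 : ℝ)/3) • ee a) • Ψ b - (((2 : ℝ)/3) • ee b) • Ψ a else 0)
    - ((((1 : ℝ)/3) • Gam3 d a b) • Ψ c + (((1 : ℝ)/3) • Gam3 d b c) • Ψ a
        + (((1 : ℝ)/3) • Gam3 d c a) • Ψ b)

/-- The commutator of two operators on the space of vector-spinors. -/
def opComm (A B : (Fin Δ → M) → (Fin Δ → M)) : (Fin Δ → M) → (Fin Δ → M) :=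
  fun Ψ => A (B Ψ) - B (A Ψ)

end VectorSpinor

/-
Everything reduces to a finite computation in each component `d`. Since `S^{abc}` is invariant
under cyclic permutations of `a, b, c`, it has closed forms at the indices `a`, `b`, `c` and at
all other indices, and so has `T^{ab}`. Substituting these into the double commutator leaves real
combinations of Clifford words applied to components of `Ψ`, which `eₐ² = 1` and
`eₐe_b = −e_beₐ` bring to a normal form in which all coefficients cancel. Only the five cases
`d = p, q, r, s` and `d ∉ {p, q, r, s}` occur.
-/

lemma stdQuadraticForm_single {n : ℕ} (a : Fin n) : stdQuadraticForm n (Pi.single a 1) = 1 := by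
  simp [stdQuadraticForm, QuadraticMap.weightedSumSquares_apply, Pi.single_apply]

lemma polar_stdQuadraticForm_single_single {n : ℕ} {a b : Fin n} (h : a ≠ b) :
    QuadraticMap.polar (stdQuadraticForm n) (Pi.single a 1) (Pi.single b 1) = 0 := by
  simp [QuadraticMap.polar, stdQuadraticForm, QuadraticMap.weightedSumSquares_apply,
    Pi.single_apply, mul_add, Finset.sum_add_distrib, h, h.symm]

lemma ee_mul_self {n : ℕ} (a : Fin n) : ee a * ee a = 1 := by
  rw [ee, CliffordAlgebra.ι_sq_scalar, stdQuadraticForm_single, map_one]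

lemma ee_mul_ee_of_ne {n : ℕ} {a b : Fin n} (h : a ≠ b) : ee a * ee b = -(ee b * ee a) := by
  have := CliffordAlgebra.ι_mul_ι_add_swap (Q := stdQuadraticForm n)
    (Pi.single a 1) (Pi.single b 1)
  rw [polar_stdQuadraticForm_single_single h, map_zero] at this
  exact eq_neg_of_add_eq_zero_left this

lemma ee_mul_ee_mul_ee_cycle {n : ℕ} {a b c : Fin n} (hab : a ≠ b) (hac : a ≠ c) :
    ee a * ee b * ee c = ee b * ee c * ee a := by
  rw [ee_mul_ee_of_ne hab, neg_mul, mul_assoc, ee_mul_ee_of_ne hac, mul_neg, neg_neg, ← mul_assoc]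

section VectorSpinorAction

variable {Δ : ℕ} {M : Type*} [AddCommGroup M] [Module (Cl Δ) M]

lemma ee_smul_ee_smul_self (a : Fin Δ) (m : M) : ee a • ee a • m = m := by
  rw [← mul_smul, ee_mul_self, one_smul]

lemma ee_smul_ee_smul_of_ne {a b : Fin Δ} (h : a ≠ b) (m : M) :
    ee a • ee b • m = -(ee b • ee a • m) := by
  rw [← mul_smul, ee_mul_ee_of_ne h, neg_smul, mul_smul]

lemma Gam3_of_ne {d x y : Fin Δ} (hx : d ≠ x) (hy : d ≠ y) : Gam3 d x y = ee d * ee x * ee y :=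
  if_neg (by tauto)

lemma Gam3_left (x y : Fin Δ) : Gam3 x x y = 0 := if_pos (Or.inl rfl)

lemma Gam3_right (x y : Fin Δ) : Gam3 y x y = 0 := if_pos (Or.inr rfl)

lemma Sop_cycle {a b c : Fin Δ} (hab : a ≠ b) (hac : a ≠ c) :
    Sop b c a = (Sop a b c : (Fin Δ → M) → Fin Δ → M) := by
  funext Ψ d
  simp only [Sop, ee_mul_ee_mul_ee_cycle hab hac]
  abel

variable [Module ℝ M] [IsScalarTower ℝ (Cl Δ) M]

lemma Tlev_apply_left {a b : Fin Δ} (h : a ≠ b) (Ψ : Fin Δ → M) :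
    Tlev a b Ψ a = (1 / 2 : ℝ) • ee a • ee b • Ψ a + Ψ b := by
  simp [Tlev, h, smul_assoc, mul_smul]

lemma Tlev_apply_right {a b : Fin Δ} (h : a ≠ b) (Ψ : Fin Δ → M) :
    Tlev a b Ψ b = (1 / 2 : ℝ) • ee a • ee b • Ψ b - Ψ a := by
  simp [Tlev, h.symm, smul_assoc, mul_smul]

lemma Tlev_apply_of_ne {a b c : Fin Δ} (ha : c ≠ a) (hb : c ≠ b) (Ψ : Fin Δ → M) :
    Tlev a b Ψ c = (1 / 2 : ℝ) • ee a • ee b • Ψ c := by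
  simp [Tlev, ha, hb, smul_assoc, mul_smul]

lemma Sop_apply_fst {a b c : Fin Δ} (hab : a ≠ b) (hac : a ≠ c) (Ψ : Fin Δ → M) :
    Sop a b c Ψ a = (1 / 6 : ℝ) • ee a • ee b • ee c • Ψ a
      + (2 / 3 : ℝ) • (ee b • Ψ c - ee c • Ψ b) := by
  simp only [Sop, Gam3_of_ne hab hac, Gam3_left, Gam3_right, if_true, hab, hac, if_false,
    smul_assoc, mul_smul, zero_smul, smul_zero, smul_sub]
  -- `module` cannot use the noncommutative `Cl Δ` as scalars: as `ℝ`-linear maps the Clifford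
  -- words become atoms.
  simp only [← DistribSMul.toLinearMap_apply ℝ M (S := Cl Δ)]
  module

lemma Sop_apply_snd {a b c : Fin Δ} (hab : a ≠ b) (hbc : b ≠ c) (hac : a ≠ c)
    (Ψ : Fin Δ → M) :
    Sop a b c Ψ b = (1 / 6 : ℝ) • ee b • ee c • ee a • Ψ b
      + (2 / 3 : ℝ) • (ee c • Ψ a - ee a • Ψ c) := by
  rw [← Sop_cycle hab hac]
  exact Sop_apply_fst hbc hab.symm Ψ

lemma Sop_apply_thd {a b c : Fin Δ} (hab : a ≠ b) (hbc : b ≠ c) (hac : a ≠ c)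
    (Ψ : Fin Δ → M) :
    Sop a b c Ψ c = (1 / 6 : ℝ) • ee c • ee a • ee b • Ψ c
      + (2 / 3 : ℝ) • (ee a • Ψ b - ee b • Ψ a) := by
  rw [← Sop_cycle hab hac, ← Sop_cycle hbc hab.symm]
  exact Sop_apply_fst hac.symm hbc.symm Ψ

lemma Sop_apply_of_ne {a b c d : Fin Δ} (ha : d ≠ a) (hb : d ≠ b) (hc : d ≠ c)
    (Ψ : Fin Δ → M) :
    Sop a b c Ψ d = (1 / 2 : ℝ) • ee a • ee b • ee c • Ψ d
      - (1 / 3 : ℝ) • (ee d • ee a • ee b • Ψ c + ee d • ee b • ee c • Ψ a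
        + ee d • ee c • ee a • Ψ b) := by
  simp only [Sop, Gam3_of_ne, ha, hb, hc, if_false, ne_eq, not_false_eq_true, smul_assoc,
    mul_smul]
  simp only [← DistribSMul.toLinearMap_apply ℝ M (S := Cl Δ)]
  module

theorem opComm_Sop_opComm_Sop_Tlev_add_Tlev_apply {p q r s : Fin Δ}
    (hpq : p ≠ q) (hpr : p ≠ r) (hps : p ≠ s) (hqr : q ≠ r) (hqs : q ≠ s) (hrs : r ≠ s)
    (Ψ : Fin Δ → M) (d : Fin Δ) :
    opComm (Sop q r s) (opComm (Sop q r s) (Tlev p q)) Ψ d + Tlev p q Ψ d = 0 := by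
  have hqp := hpq.symm; have hrp := hpr.symm; have hsp := hps.symm
  have hrq := hqr.symm; have hsq := hqs.symm; have hsr := hrs.symm
  obtain ⟨hdp, hdq, hdr, hds⟩ | rfl | rfl | rfl | rfl :
      (d ≠ p ∧ d ≠ q ∧ d ≠ r ∧ d ≠ s) ∨ d = p ∨ d = q ∨ d = r ∨ d = s := by tauto
  all_goals
    simp only [opComm, Pi.sub_apply, Sop_apply_fst, Sop_apply_snd, Sop_apply_thd,
      Sop_apply_of_ne, Tlev_apply_left, Tlev_apply_right, Tlev_apply_of_ne, ne_eq,
      not_false_eq_true, *]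
  -- At a generic index `e_d` is first moved to the right end of every word, where its
  -- occurrences cancel in pairs.
  on_goal 1 =>
    simp only [smul_add, smul_sub, smul_neg, neg_neg,
      smul_algebra_smul_comm (R := ℝ) (A := Cl Δ) (M := M), ee_smul_ee_smul_self,
      ee_smul_ee_smul_of_ne hdp, ee_smul_ee_smul_of_ne hdq, ee_smul_ee_smul_of_ne hdr,
      ee_smul_ee_smul_of_ne hds]
  all_goals
    simp only [smul_add, smul_sub, smul_neg, neg_neg,
      smul_algebra_smul_comm (R := ℝ) (A := Cl Δ) (M := M), ee_smul_ee_smul_self,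
      ee_smul_ee_smul_of_ne hqp, ee_smul_ee_smul_of_ne hrp, ee_smul_ee_smul_of_ne hsp,
      ee_smul_ee_smul_of_ne hrq, ee_smul_ee_smul_of_ne hsq, ee_smul_ee_smul_of_ne hsr]
    simp only [← DistribSMul.toLinearMap_apply ℝ M (S := Cl Δ)]
    module

end VectorSpinorAction

theorem stmt8_general (Δ : ℕ) (M : Type*) [AddCommGroup M] [Module (Cl Δ) M]
    (p q r s : Fin Δ)
    (hpq : p ≠ q) (hpr : p ≠ r) (hps : p ≠ s)
    (hqr : q ≠ r) (hqs : q ≠ s) (hrs : r ≠ s) :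
    ∀ Ψ : Fin Δ → M,
      opComm (Sop q r s) (opComm (Sop q r s) (Tlev p q)) Ψ + Tlev p q Ψ = 0 := by
  let : Module ℝ M := Module.compHom M (algebraMap ℝ (Cl Δ))
  have : IsScalarTower ℝ (Cl Δ) M := IsScalarTower.of_compHom ℝ (Cl Δ) M
  intro Ψ
  funext d
  exact opComm_Sop_opComm_Sop_Tlev_add_Tlev_apply hpq hpr hps hqr hqs hrs Ψ d

/-- the Serre-like consistency relation
`⁅S^{qrs}, ⁅S^{qrs}, T^{pq}⁆⁆ + T^{pq} = 0` for the unfaithful vector-spinor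
representation, with `p, q, r, s` pairwise distinct, in any dimension `Δ ≥ 4`. -/
theorem stmt8 (Δ : ℕ) (hΔ : 4 ≤ Δ) (M : Type*) [AddCommGroup M] [Module (Cl Δ) M]
    (p q r s : Fin Δ)
    (hpq : p ≠ q) (hpr : p ≠ r) (hps : p ≠ s)
    (hqr : q ≠ r) (hqs : q ≠ s) (hrs : r ≠ s) :
    ∀ Ψ : Fin Δ → M,
      opComm (Sop q r s) (opComm (Sop q r s) (Tlev p q)) Ψ + Tlev p q Ψ = 0 :=
  stmt8_general Δ M p q r s hpq hpr hps hqr hqs hrs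
end

section
/- Let Δ ≥ 3, let a, b, c ∈ {1,…,Δ} be pairwise distinct, and let Ψ ∈ V be a vector-spinor which is Γ-traceless, i.e. Σ_{d=1}^{Δ} e_d·Ψ_d = 0. Then Σ_{d=1}^{Δ} e_d·(S^{abc}Ψ)_d = (9 − Δ)·(1/3)·(e_a e_b·Ψ_c + e_b e_c·Ψ_a + e_c e_a·Ψ_b). In particular, Γ-tracelessness is preserved by the level-one action S^{abc} if and only if Δ = 9. -/
lemma ee_sq {n : ℕ} (d : Fin n) : ee d * ee d = 1 := by
  rw [ee, CliffordAlgebra.ι_sq_scalar]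
  have : stdQuadraticForm n (Pi.single d 1) = 1 := by
    simp [stdQuadraticForm, QuadraticMap.weightedSumSquares_apply, Pi.single_apply]
  rw [this, map_one]

lemma ee_anticomm {n : ℕ} {d x : Fin n} (h : d ≠ x) :
    ee d * ee x = -(ee x * ee d) := by
  have h2 : ee d * ee x + ee x * ee d = 0 := by
    rw [ee, ee, CliffordAlgebra.ι_mul_ι_add_swap]
    have : QuadraticMap.polar (stdQuadraticForm n) (Pi.single d 1) (Pi.single x 1) = 0 := by
      simp only [stdQuadraticForm, QuadraticMap.polar, QuadraticMap.weightedSumSquares_apply,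
        Pi.single_apply, Pi.add_apply, one_mul, smul_eq_mul]
      have hs : ∀ y : Fin n, ((if y = d then (1:ℝ) else 0) + if y = x then 1 else 0) *
          ((if y = d then (1:ℝ) else 0) + if y = x then 1 else 0)
          = (if y = d then (1:ℝ) else 0) + (if y = x then 1 else 0) := by
        intro y
        by_cases h1 : y = d <;> by_cases h2 : y = x <;> simp_all
      simp [hs, Finset.sum_add_distrib, Finset.sum_ite_eq']
    rw [this, map_zero]
  rw [eq_neg_iff_add_eq_zero]; exact h2

lemma ee_cancel {n : ℕ} (d : Fin n) (x : Cl n) : ee d * (ee d * x) = x := by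
  rw [← mul_assoc, ee_sq, one_mul]

lemma ee_swap {n : ℕ} {d x : Fin n} (h : d ≠ x) (y : Cl n) :
    ee d * (ee x * y) = -(ee x * (ee d * y)) := by
  rw [← mul_assoc, ee_anticomm h, neg_mul, mul_assoc]

lemma gGam {n : ℕ} (d x y : Fin n) : ee d * (ee d * ee x * ee y) = ee x * ee y := by
  rw [mul_assoc (ee d) (ee x) (ee y), ee_cancel]

section Glemmas
variable {n : ℕ} {a b c : Fin n} (hab : a ≠ b) (hac : a ≠ c) (hbc : b ≠ c)

lemma gA : ee a * (ee a * ee b * ee c) = ee b * ee c := by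
  rw [mul_assoc, ee_cancel]

include hac hab in
lemma gA' : (ee a * ee b * ee c) * ee a = ee b * ee c := by
  simp only [mul_assoc]
  rw [ee_anticomm hac.symm]
  simp only [mul_neg]
  rw [ee_swap hab.symm]
  simp only [mul_neg, neg_neg]
  rw [ee_cancel]

include hab in
lemma gB : ee b * (ee a * ee b * ee c) = -(ee a * ee c) := by
  simp only [mul_assoc]
  rw [ee_swap hab.symm, ee_cancel]

include hbc in
lemma gB' : (ee a * ee b * ee c) * ee b = -(ee a * ee c) := by
  simp only [mul_assoc]
  rw [ee_anticomm hbc.symm]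
  simp only [mul_neg]
  rw [ee_cancel]

include hac hbc in
lemma gC : ee c * (ee a * ee b * ee c) = ee a * ee b := by
  simp only [mul_assoc]
  rw [ee_swap hac.symm, ee_swap hbc.symm]
  simp only [mul_neg, neg_neg, ee_sq, mul_one]

lemma gC' : (ee a * ee b * ee c) * ee c = ee a * ee b := by
  simp only [mul_assoc]
  rw [ee_sq, mul_one]

lemma gD {d : Fin n} (hda : d ≠ a) (hdb : d ≠ b) (hdc : d ≠ c) :
    ee d * (ee a * ee b * ee c) = -((ee a * ee b * ee c) * ee d) := by
  simp only [mul_assoc]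
  rw [ee_swap hda, ee_swap hdb, ee_anticomm hdc]
  simp only [mul_neg, neg_neg]

end Glemmas

lemma sum_if_or {n : ℕ} {a b : Fin n} (hab : a ≠ b) {M : Type*} [AddCommGroup M]
    [Module ℝ M] (X : M) :
    ∑ d : Fin n, (if d = a ∨ d = b then (0:M) else X) = ((n:ℝ) - 2) • X := by
  have h1 : ∀ d : Fin n, (if d = a ∨ d = b then (0:M) else X)
      = X - ((if d = a then X else 0) + (if d = b then X else 0)) := by
    intro d
    by_cases h1 : d = a <;> by_cases h2 : d = b <;> simp_all
  simp only [h1]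
  rw [Finset.sum_sub_distrib, Finset.sum_add_distrib, Finset.sum_const,
    Finset.sum_ite_eq', Finset.sum_ite_eq']
  simp only [Finset.card_univ, Fintype.card_fin, Finset.mem_univ, if_true]
  rw [← Nat.cast_smul_eq_nsmul ℝ]
  module

/-- for `Δ ≥ 3`, pairwise distinct `a, b, c` and a Γ-traceless
vector-spinor `Ψ` (i.e. `Σ_d e_d·Ψ_d = 0`),
`Σ_d e_d·(S^{abc}Ψ)_d = (9 − Δ)·(1/3)·(e_a e_b·Ψ_c + e_b e_c·Ψ_a + e_c e_a·Ψ_b)`. -/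
theorem stmt9 (Δ : ℕ) (hΔ : 3 ≤ Δ) (M : Type*) [AddCommGroup M] [Module (Cl Δ) M]
    (a b c : Fin Δ) (hab : a ≠ b) (hac : a ≠ c) (hbc : b ≠ c)
    (Ψ : Fin Δ → M) (hΨ : ∑ d, ee d • Ψ d = 0) :
    ∑ d, ee d • (Sop a b c Ψ) d
      = ((((9 : ℝ) - (Δ : ℝ))/3) • (ee a * ee b)) • Ψ c
        + ((((9 : ℝ) - (Δ : ℝ))/3) • (ee b * ee c)) • Ψ a
        + ((((9 : ℝ) - (Δ : ℝ))/3) • (ee c * ee a)) • Ψ b := by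
  classical
  letI : Module ℝ M := Module.compHom M (algebraMap ℝ (Cl Δ))
  haveI : IsScalarTower ℝ (Cl Δ) M :=
    ⟨fun r g m => by
      show (r • g) • m = algebraMap ℝ (Cl Δ) r • (g • m)
      rw [Algebra.smul_def, mul_smul]⟩
  have point : ∀ d : Fin Δ, ee d • Sop a b c Ψ d
      = ((-(1/2 : ℝ)) • ((ee a * ee b * ee c) * ee d)) • Ψ d
        + (if d = a then (ee b * ee c) • Ψ a + (((2:ℝ)/3) • (ee a * ee b)) • Ψ c
            - (((2:ℝ)/3) • (ee a * ee c)) • Ψ b else 0)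
        + (if d = b then (ee c * ee a) • Ψ b + (((2:ℝ)/3) • (ee b * ee c)) • Ψ a
            - (((2:ℝ)/3) • (ee b * ee a)) • Ψ c else 0)
        + (if d = c then (ee a * ee b) • Ψ c + (((2:ℝ)/3) • (ee c * ee a)) • Ψ b
            - (((2:ℝ)/3) • (ee c * ee b)) • Ψ a else 0)
        - ((if d = a ∨ d = b then 0 else (((1:ℝ)/3) • (ee a * ee b)) • Ψ c)
          + (if d = b ∨ d = c then 0 else (((1:ℝ)/3) • (ee b * ee c)) • Ψ a)
          + (if d = c ∨ d = a then 0 else (((1:ℝ)/3) • (ee c * ee a)) • Ψ b)) := by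
    intro d
    have hpush : ∀ (g : Cl Δ) (r : ℝ) (m : M), g • r • m = r • g • m := by
      intro g r m
      show g • ((algebraMap ℝ (Cl Δ) r) • m) = (algebraMap ℝ (Cl Δ) r) • (g • m)
      rw [smul_smul, smul_smul, Algebra.commutes]
    rcases eq_or_ne d a with hda | hda
    · simp only [hda]
      simp [Sop, Gam3, hab, hac, hbc, hab.symm, hac.symm, hbc.symm]
      simp only [smul_add, smul_sub, hpush, smul_smul]
      rw [gA (n := Δ) (a := a) (b := b) (c := c), gA' hab hac]
      generalize (ee b * ee c) • Ψ a = A2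
      generalize (ee a * ee b) • Ψ c = A1
      generalize (ee a * ee c) • Ψ b = A4
      module
    rcases eq_or_ne d b with hdb | hdb
    · simp only [hdb]
      simp [Sop, Gam3, hab, hac, hbc, hab.symm, hac.symm, hbc.symm]
      simp only [smul_add, smul_sub, hpush, smul_smul]
      rw [gB hab, gB' hbc, gGam b c a, ee_anticomm hac.symm]
      simp only [smul_neg, neg_neg, neg_smul]
      generalize (ee a * ee c) • Ψ b = A4
      generalize (ee b * ee c) • Ψ a = A2
      generalize (ee b * ee a) • Ψ c = A5
      module
    rcases eq_or_ne d c with hdc | hdc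
    · simp only [hdc]
      simp [Sop, Gam3, hab, hac, hbc, hab.symm, hac.symm, hbc.symm]
      simp only [smul_add, smul_sub, hpush, smul_smul]
      rw [gC hac hbc, gC' (n := Δ) (a := a) (b := b) (c := c), gGam c a b]
      generalize (ee a * ee b) • Ψ c = A1
      generalize (ee c * ee a) • Ψ b = A3
      generalize (ee c * ee b) • Ψ a = A6
      module
    · simp [Sop, Gam3, hda, hdb, hdc, hab, hac, hbc]
      simp only [smul_add, smul_sub, hpush, smul_smul]
      rw [gD hda hdb hdc, gGam d a b, gGam d b c, gGam d c a]
      simp only [neg_smul, smul_neg]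
  calc ∑ d, ee d • Sop a b c Ψ d
      = ∑ d, (((-(1/2 : ℝ)) • ((ee a * ee b * ee c) * ee d)) • Ψ d
        + (if d = a then (ee b * ee c) • Ψ a + (((2:ℝ)/3) • (ee a * ee b)) • Ψ c
            - (((2:ℝ)/3) • (ee a * ee c)) • Ψ b else 0)
        + (if d = b then (ee c * ee a) • Ψ b + (((2:ℝ)/3) • (ee b * ee c)) • Ψ a
            - (((2:ℝ)/3) • (ee b * ee a)) • Ψ c else 0)
        + (if d = c then (ee a * ee b) • Ψ c + (((2:ℝ)/3) • (ee c * ee a)) • Ψ b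
            - (((2:ℝ)/3) • (ee c * ee b)) • Ψ a else 0)
        - ((if d = a ∨ d = b then 0 else (((1:ℝ)/3) • (ee a * ee b)) • Ψ c)
          + (if d = b ∨ d = c then 0 else (((1:ℝ)/3) • (ee b * ee c)) • Ψ a)
          + (if d = c ∨ d = a then 0 else (((1:ℝ)/3) • (ee c * ee a)) • Ψ b))) :=
        Finset.sum_congr rfl (fun d _ => point d)
    _ = _ := by
        simp only [Finset.sum_sub_distrib, Finset.sum_add_distrib]
        rw [Finset.sum_ite_eq' Finset.univ a, Finset.sum_ite_eq' Finset.univ b,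
          Finset.sum_ite_eq' Finset.univ c, sum_if_or hab, sum_if_or hbc, sum_if_or hac.symm]
        have hsum1 : ∑ d : Fin Δ, ((-(1/2 : ℝ)) • ((ee a * ee b * ee c) * ee d)) • Ψ d = 0 := by
          have : ∀ d : Fin Δ, ((-(1/2 : ℝ)) • ((ee a * ee b * ee c) * ee d)) • Ψ d
              = ((-(1/2 : ℝ)) • (ee a * ee b * ee c)) • (ee d • Ψ d) := by
            intro d
            rw [smul_smul, smul_mul_assoc]
          simp only [this, ← Finset.smul_sum, hΨ, smul_zero]
        rw [hsum1]
        simp only [Finset.mem_univ, if_true]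
        rw [ee_anticomm hbc.symm, ee_anticomm hab.symm, ee_anticomm hac]
        simp only [smul_assoc, smul_neg, neg_smul, neg_neg]
        generalize (ee a * ee b) • Ψ c = A1
        generalize (ee b * ee c) • Ψ a = A2
        generalize (ee c * ee a) • Ψ b = A3
        module
end
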